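/- arXiv:2005.01825 — 5 statements merged into one kernel-verified Lean document; each statement's English description precedes it below -/
import Mathlib

section
/- Let 0 < L < ∞ and let {(y_i, u_i)}_{i∈I} ⊂ ℝ^d × ℝ^d be a finite indexed set. Then {(y_i, u_i)}_{i∈I} is S_{0,L} interpolable (there exists a convex differentiable f : ℝ^d → ℝ with L-Lipschitz gradient and ∇f(y_i) = u_i for all i ∈ I) if and only if the swapped set {(u_i, y_i)}_{i∈I} is S_{1/L, ∞} interpolable (there exists a (1/L)-strongly convex function g : ℝ^d → ℝ such that y_i is a subgradient of g at u_i for all i ∈ I). -/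
open RealInnerProductSpace

/-- `u` is a subgradient of `f` at `y`. -/
def IsSubgradientAt {d : ℕ} (f : EuclideanSpace ℝ (Fin d) → ℝ)
    (u y : EuclideanSpace ℝ (Fin d)) : Prop :=
  ∀ z, f y + ⟪u, z - y⟫ ≤ f z

/-- `f` is `m`-strongly convex: `y ↦ f y - m/2 ‖y‖²` is convex. -/
def StronglyConvexFun {d : ℕ} (m : ℝ) (f : EuclideanSpace ℝ (Fin d) → ℝ) : Prop :=
  ConvexOn ℝ Set.univ (fun y => f y - m / 2 * ‖y‖ ^ 2)

/-!
This is Fenchel duality between `L`-smooth convex functions and `1/L`-strongly convex ones.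

If `f` is convex with `L`-Lipschitz gradient, the descent lemma and the gradient inequality give
`f x + ⟪∇f x, z - x⟫ + ‖∇f z - ∇f x‖² / (2L) ≤ f z`. With `c i = ⟪u i, y i⟫ - f (y i)` (the value
of the conjugate at `u i`), these are exactly the `1/L`-strongly convex interpolation conditions
for the swapped data, and the maximum of the quadratic minorants
`c i + ⟪y i, z - u i⟫ + ‖z - u i‖² / (2L)` interpolates it.

Conversely, if `g` is `1/L`-strongly convex and has a subgradient somewhere, `g - ⟪x, ·⟫` grows
quadratically, so attains its minimum at some `P x`. The conjugate `x ↦ ⟪x, P x⟫ - g (P x)` is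
convex with gradient `P x` at `x`, `P` is `L`-Lipschitz by strong monotonicity of subgradients,
and `P (y i) = u i` because that minimizer is unique.
-/

open Set Filter Topology

section

variable {E : Type*} [NormedAddCommGroup E] [InnerProductSpace ℝ E]

lemma convexOn_univ_of_forall_add_inner_le {f : E → ℝ} {D : E → E}
    (hD : ∀ x z, f x + ⟪D x, z - x⟫ ≤ f z) : ConvexOn ℝ univ f := by
  refine ⟨convex_univ, fun x₁ _ x₂ _ a b ha hb hab => ?_⟩
  obtain rfl : b = 1 - a := eq_sub_of_add_eq' hab
  set x := a • x₁ + (1 - a) • x₂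
  have hsum : a * ⟪D x, x₁ - x⟫ + (1 - a) * ⟪D x, x₂ - x⟫ = 0 := by
    rw [← real_inner_smul_right, ← real_inner_smul_right, ← inner_add_right,
      show a • (x₁ - x) + (1 - a) • (x₂ - x) = 0 by simp only [x]; module, inner_zero_right]
  have h₁ := mul_le_mul_of_nonneg_left (hD x x₁) ha
  have h₂ := mul_le_mul_of_nonneg_left (hD x x₂) hb
  simp only [smul_eq_mul]
  linear_combination h₁ + h₂ - hsum

lemma hasGradientAt_of_quadratic_sandwich [CompleteSpace E] {f : E → ℝ} {v x : E} {C : ℝ}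
    (hlo : ∀ z, f x + ⟪v, z - x⟫ ≤ f z) (hup : ∀ z, f z ≤ f x + ⟪v, z - x⟫ + C * ‖z - x‖ ^ 2) :
    HasGradientAt f v x := by
  rw [hasGradientAt_iff_isLittleO]
  refine (Asymptotics.IsBigO.of_bound C (Eventually.of_forall fun z => ?_)).trans_isLittleO
    (Asymptotics.isLittleO_pow_sub_sub x one_lt_two)
  rw [Real.norm_of_nonneg (by linarith [hlo z]), norm_pow, norm_norm]
  linarith [hup z]

section Gradient

variable [CompleteSpace E] {f : E → ℝ}

lemma HasGradientAt.hasDerivAt_comp_add_smul {v x w : E} {t : ℝ}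
    (hf : HasGradientAt f v (x + t • w)) :
    HasDerivAt (fun s : ℝ => f (x + s • w)) ⟪v, w⟫ t := by
  have hline : HasDerivAt (fun s : ℝ => x + s • w) w t := by
    simpa using ((hasDerivAt_id t).smul_const w).const_add x
  exact (hasGradientAt_iff_hasFDerivAt.mp hf).comp_hasDerivAt t hline

lemma ConvexOn.add_inner_le_of_hasGradientAt (hf : ConvexOn ℝ univ f) {v x : E}
    (hv : HasGradientAt f v x) (z : E) : f x + ⟪v, z - x⟫ ≤ f z := by
  have hline : ConvexOn ℝ univ (fun t : ℝ => f (x + t • (z - x))) := by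
    simpa [Function.comp_def, AffineMap.lineMap_apply_module', add_comm]
      using hf.comp_affineMap (AffineMap.lineMap x z)
  have hder := (show HasGradientAt f v (x + (0 : ℝ) • (z - x)) by simpa using hv)
    |>.hasDerivAt_comp_add_smul
  have := hline.le_slope_of_hasDerivAt (mem_univ 0) (mem_univ 1) zero_lt_one hder
  simp only [slope_def_field, one_smul, zero_smul, add_zero, add_sub_cancel, sub_zero,
    div_one] at this
  linarith

lemma le_add_inner_gradient_add_sq_of_lipschitz {L : ℝ} (hf : Differentiable ℝ f)
    (hlip : ∀ y₁ y₂, ‖gradient f y₂ - gradient f y₁‖ ≤ L * ‖y₂ - y₁‖) (x z : E) :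
    f z ≤ f x + ⟪gradient f x, z - x⟫ + L / 2 * ‖z - x‖ ^ 2 := by
  set w := z - x
  set ψ : ℝ → ℝ := fun t => f (x + t • w) - t * ⟪gradient f x, w⟫ - L / 2 * ‖w‖ ^ 2 * t ^ 2
  have hψ : ∀ t, HasDerivAt ψ (⟪gradient f (x + t • w) - gradient f x, w⟫ - L * ‖w‖ ^ 2 * t) t := by
    intro t
    refine ((((hf _).hasGradientAt.hasDerivAt_comp_add_smul).sub
      (hasDerivAt_mul_const ⟪gradient f x, w⟫)).sub
      ((hasDerivAt_pow 2 t).const_mul (L / 2 * ‖w‖ ^ 2))).congr_deriv ?_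
    rw [inner_sub_left]
    push_cast
    ring
  have hψ_anti : AntitoneOn ψ (Icc 0 1) := by
    refine antitoneOn_of_hasDerivWithinAt_nonpos (convex_Icc 0 1)
      (fun t _ => (hψ t).continuousAt.continuousWithinAt) (fun t _ => (hψ t).hasDerivWithinAt) ?_
    intro t ht
    rw [interior_Icc] at ht
    have hstep : ‖gradient f (x + t • w) - gradient f x‖ ≤ L * t * ‖w‖ := by
      simpa [norm_smul, abs_of_pos ht.1, mul_assoc] using hlip x (x + t • w)
    nlinarith [real_inner_le_norm (gradient f (x + t • w) - gradient f x) w,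
      mul_le_mul_of_nonneg_right hstep (norm_nonneg w)]
  have := hψ_anti (left_mem_Icc.mpr zero_le_one) (right_mem_Icc.mpr zero_le_one) zero_le_one
  simp only [ψ, w, zero_smul, add_zero, one_smul, add_sub_cancel] at this
  linarith

lemma ConvexOn.add_inner_gradient_add_sq_le {L : ℝ} (hL : 0 < L) (hconv : ConvexOn ℝ univ f)
    (hf : Differentiable ℝ f)
    (hlip : ∀ y₁ y₂, ‖gradient f y₂ - gradient f y₁‖ ≤ L * ‖y₂ - y₁‖) (x z : E) :
    f x + ⟪gradient f x, z - x⟫ + 1 / L / 2 * ‖gradient f z - gradient f x‖ ^ 2 ≤ f z := by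
  set δ := gradient f z - gradient f x
  -- the minimizer of the upper bound from `z` minus the lower bound from `x`
  set w := z - (1 / L) • δ
  have hbelow := hconv.add_inner_le_of_hasGradientAt (hf x).hasGradientAt w
  have habove := le_add_inner_gradient_add_sq_of_lipschitz hf hlip z w
  have hδ : 1 / L * ⟪gradient f z, δ⟫ - 1 / L * ⟪gradient f x, δ⟫ = 1 / L * ‖δ‖ ^ 2 := by
    rw [← mul_sub, ← inner_sub_left, real_inner_self_eq_norm_sq]
  rw [show w - x = (z - x) - (1 / L) • δ by simp only [w]; abel, inner_sub_right,
    real_inner_smul_right] at hbelow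
  rw [show w - z = -((1 / L) • δ) by simp [w], inner_neg_right, real_inner_smul_right, norm_neg,
    norm_smul, Real.norm_of_nonneg (by positivity : (0 : ℝ) ≤ 1 / L)] at habove
  have hsq : L / 2 * (1 / L * ‖δ‖) ^ 2 = 1 / L / 2 * ‖δ‖ ^ 2 := by field_simp
  linarith

end Gradient

section StrongConvexity

variable {g : E → ℝ} {m : ℝ}

lemma StrongConvexOn.add_inner_add_sq_le (hg : StrongConvexOn univ m g) {v p : E}
    (hv : ∀ z, g p + ⟪v, z - p⟫ ≤ g z) (z : E) :
    g p + ⟪v, z - p⟫ + m / 2 * ‖z - p‖ ^ 2 ≤ g z := by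
  have hchord : ∀ t ∈ Ioc (0 : ℝ) 1,
      g p + ⟪v, z - p⟫ + m / 2 * (1 - t) * ‖z - p‖ ^ 2 ≤ g z := by
    rintro t ⟨ht0, ht1⟩
    have hconv := hg.2 (mem_univ p) (mem_univ z) (sub_nonneg.mpr ht1) ht0.le (by ring)
    have hsub := hv ((1 - t) • p + t • z)
    rw [show (1 - t) • p + t • z - p = t • (z - p) by module, real_inner_smul_right] at hsub
    rw [norm_sub_rev] at hconv
    simp only [smul_eq_mul] at hconv
    nlinarith
  have hlim : Tendsto (fun t : ℝ => g p + ⟪v, z - p⟫ + m / 2 * (1 - t) * ‖z - p‖ ^ 2)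
      (𝓝[>] 0) (𝓝 (g p + ⟪v, z - p⟫ + m / 2 * (1 - 0) * ‖z - p‖ ^ 2)) :=
    (Continuous.tendsto (by fun_prop) 0).mono_left nhdsWithin_le_nhds
  simpa using le_of_tendsto hlim <| mem_of_superset (Ioc_mem_nhdsGT zero_lt_one) hchord

lemma UniformConvexOn.sup {s : Set E} {φ : ℝ → ℝ} {f₁ f₂ : E → ℝ}
    (hf₁ : UniformConvexOn s φ f₁) (hf₂ : UniformConvexOn s φ f₂) :
    UniformConvexOn s φ (f₁ ⊔ f₂) := by
  refine ⟨hf₁.1, fun x hx z hz a b ha hb hab => sup_le ?_ ?_⟩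
  · refine (hf₁.2 hx hz ha hb hab).trans ?_
    simp only [smul_eq_mul, Pi.sup_apply]
    gcongr <;> exact le_sup_left
  · refine (hf₂.2 hx hz ha hb hab).trans ?_
    simp only [smul_eq_mul, Pi.sup_apply]
    gcongr <;> exact le_sup_right

lemma strongConvexOn_add_inner_add_sq (c : ℝ) (v p : E) :
    StrongConvexOn univ m (fun z => c + ⟪v, z - p⟫ + m / 2 * ‖z - p‖ ^ 2) := by
  rw [strongConvexOn_iff_convex]
  have haffine : (fun z => c + ⟪v, z - p⟫ + m / 2 * ‖z - p‖ ^ 2 - m / 2 * ‖z‖ ^ 2) =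
      fun z => innerₛₗ ℝ (v - m • p) z + (c - ⟪v, p⟫ + m / 2 * ‖p‖ ^ 2) := by
    funext z
    rw [innerₛₗ_apply_apply, norm_sub_sq_real, inner_sub_right, inner_sub_left,
      real_inner_smul_left, real_inner_comm z p]
    ring
  rw [haffine]
  exact ((innerₛₗ ℝ (v - m • p)).convexOn convex_univ).add_const _

lemma exists_strongConvexOn_interpolating {ι : Type*} [Fintype ι] [Nonempty ι] (hm : 0 ≤ m)
    (u y : ι → E) (c : ι → ℝ)
    (hc : ∀ i j, c i + ⟪y i, u j - u i⟫ + m / 2 * ‖u j - u i‖ ^ 2 ≤ c j) :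
    ∃ g : E → ℝ, StrongConvexOn univ m g ∧ ∀ i z, g (u i) + ⟪y i, z - u i⟫ ≤ g z := by
  set q : ι → E → ℝ := fun i z => c i + ⟪y i, z - u i⟫ + m / 2 * ‖z - u i‖ ^ 2
  set g := Finset.univ.sup' Finset.univ_nonempty q
  have hq_le : ∀ i z, q i z ≤ g z := fun i => Finset.le_sup' q (Finset.mem_univ i)
  have hg_u : ∀ j, g (u j) = c j := fun j =>
    le_antisymm (by simpa only [g, Finset.sup'_apply] using Finset.sup'_le _ _ fun i _ => hc i j)
      (by simpa [q] using hq_le j (u j))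
  refine ⟨g, ?_, fun i z => ?_⟩
  · exact Finset.sup'_induction _ _ (fun _ h₁ _ h₂ => h₁.sup h₂)
      fun i _ => strongConvexOn_add_inner_add_sq _ _ _
  · rw [hg_u]
    exact (le_add_of_nonneg_right (by positivity)).trans (hq_le i z)

lemma StrongConvexOn.mul_sq_norm_sub_le_inner (hg : StrongConvexOn univ m g) {v₁ v₂ p₁ p₂ : E}
    (h₁ : ∀ z, g p₁ + ⟪v₁, z - p₁⟫ ≤ g z) (h₂ : ∀ z, g p₂ + ⟪v₂, z - p₂⟫ ≤ g z) :
    m * ‖p₂ - p₁‖ ^ 2 ≤ ⟪v₂ - v₁, p₂ - p₁⟫ := by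
  have h₁₂ := hg.add_inner_add_sq_le h₁ p₂
  have h₂₁ := hg.add_inner_add_sq_le h₂ p₁
  rw [norm_sub_rev, show p₁ - p₂ = -(p₂ - p₁) by abel, inner_neg_right] at h₂₁
  rw [inner_sub_left]
  linarith

lemma StrongConvexOn.mul_norm_sub_le_norm_sub (hg : StrongConvexOn univ m g) {v₁ v₂ p₁ p₂ : E}
    (h₁ : ∀ z, g p₁ + ⟪v₁, z - p₁⟫ ≤ g z) (h₂ : ∀ z, g p₂ + ⟪v₂, z - p₂⟫ ≤ g z) :
    m * ‖p₂ - p₁‖ ≤ ‖v₂ - v₁‖ := by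
  have hmono := (hg.mul_sq_norm_sub_le_inner h₁ h₂).trans (real_inner_le_norm _ _)
  rcases (norm_nonneg (p₂ - p₁)).eq_or_lt with h0 | hpos
  · rw [← h0, mul_zero]
    exact norm_nonneg _
  · nlinarith

lemma StrongConvexOn.continuous [FiniteDimensional ℝ E] (hg : StrongConvexOn univ m g) :
    Continuous g := by
  have h := continuousOn_univ.mp ((strongConvexOn_iff_convex.mp hg).continuousOn isOpen_univ)
  exact (h.add (by fun_prop : Continuous fun z : E => m / 2 * ‖z‖ ^ 2)).congr
    fun z => sub_add_cancel _ _

lemma exists_forall_le_of_quadratic_growth [ProperSpace E] {h : E → ℝ} (hh : Continuous h)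
    (hm : 0 < m) {p w : E} (hgrowth : ∀ z, h p + ⟪w, z - p⟫ + m / 2 * ‖z - p‖ ^ 2 ≤ h z) :
    ∃ q, ∀ z, h q ≤ h z := by
  refine hh.exists_forall_le' p ?_
  filter_upwards [(isCompact_closedBall p (2 * ‖w‖ / m)).compl_mem_cocompact] with z hz
  have hfar : 2 * ‖w‖ < m * ‖z - p‖ := by
    rw [mem_compl_iff, Metric.mem_closedBall, not_le, dist_eq_norm, div_lt_iff₀ hm] at hz
    linarith
  nlinarith [hgrowth z, neg_le_of_abs_le (abs_real_inner_le_norm w (z - p)), norm_nonneg (z - p)]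

lemma StrongConvexOn.exists_add_inner_le [FiniteDimensional ℝ E] (hg : StrongConvexOn univ m g)
    (hm : 0 < m) {v p : E} (hv : ∀ z, g p + ⟪v, z - p⟫ ≤ g z) (x : E) :
    ∃ q, ∀ z, g q + ⟪x, z - q⟫ ≤ g z := by
  obtain ⟨q, hq⟩ := exists_forall_le_of_quadratic_growth (h := fun z => g z - ⟪x, z⟫)
    (hg.continuous.sub (by fun_prop)) hm (p := p) (w := v - x) fun z => by
      have := hg.add_inner_add_sq_le hv z
      rw [inner_sub_left, inner_sub_right x]
      linarith
  refine ⟨q, fun z => ?_⟩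
  have := hq z
  rw [inner_sub_right]
  linarith

end StrongConvexity

section Legendre

variable {g : E → ℝ} {P : E → E}

/-- When `x` is a subgradient of `g` at `P x` for every `x`, this is the convex conjugate
`x ↦ ⨆ s, ⟪x, s⟫ - g s`, whose supremum is attained at `P x`. -/
def legendreTransform (g : E → ℝ) (P : E → E) (x : E) : ℝ :=
  ⟪x, P x⟫ - g (P x)

lemma inner_sub_le_legendreTransform (hP : ∀ x z, g (P x) + ⟪x, z - P x⟫ ≤ g z) (x s : E) :
    ⟪x, s⟫ - g s ≤ legendreTransform g P x := by
  have := hP x s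
  rw [inner_sub_right] at this
  unfold legendreTransform
  linarith

lemma legendreTransform_add_inner_le (hP : ∀ x z, g (P x) + ⟪x, z - P x⟫ ≤ g z) (x z : E) :
    legendreTransform g P x + ⟪P x, z - x⟫ ≤ legendreTransform g P z := by
  have := inner_sub_le_legendreTransform hP z (P x)
  rw [real_inner_comm, inner_sub_left]
  unfold legendreTransform at *
  linarith

lemma legendreTransform_le (hP : ∀ x z, g (P x) + ⟪x, z - P x⟫ ≤ g z) (x z : E) :
    legendreTransform g P z ≤
      legendreTransform g P x + ⟪P x, z - x⟫ + ⟪z - x, P z - P x⟫ := by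
  have := inner_sub_le_legendreTransform hP x (P z)
  rw [real_inner_comm, inner_sub_right, inner_sub_left, inner_sub_left]
  unfold legendreTransform at *
  linarith

lemma hasGradientAt_legendreTransform [CompleteSpace E]
    (hP : ∀ x z, g (P x) + ⟪x, z - P x⟫ ≤ g z) {C : ℝ} (hlip : ∀ x₁ x₂, ‖P x₂ - P x₁‖ ≤ C * ‖x₂ - x₁‖) (x : E) :
    HasGradientAt (legendreTransform g P) (P x) x := by
  refine hasGradientAt_of_quadratic_sandwich (C := C) (legendreTransform_add_inner_le hP x)
    fun z => ?_
  calc legendreTransform g P z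
      ≤ legendreTransform g P x + ⟪P x, z - x⟫ + ⟪z - x, P z - P x⟫ :=
        legendreTransform_le hP x z
    _ ≤ legendreTransform g P x + ⟪P x, z - x⟫ + ‖z - x‖ * (C * ‖z - x‖) := by
        gcongr
        exact (real_inner_le_norm _ _).trans (by gcongr; exact hlip x z)
    _ = legendreTransform g P x + ⟪P x, z - x⟫ + C * ‖z - x‖ ^ 2 := by ring

end Legendre

lemma ConvexOn.exists_strongConvexOn_interpolating_gradient [CompleteSpace E] {f : E → ℝ}
    {L : ℝ} {ι : Type*} [Fintype ι] [Nonempty ι] (hL : 0 < L) (hconv : ConvexOn ℝ univ f)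
    (hf : Differentiable ℝ f)
    (hlip : ∀ y₁ y₂, ‖gradient f y₂ - gradient f y₁‖ ≤ L * ‖y₂ - y₁‖) (y : ι → E) :
    ∃ g : E → ℝ, StrongConvexOn univ (1 / L) g ∧
      ∀ i z, g (gradient f (y i)) + ⟪y i, z - gradient f (y i)⟫ ≤ g z := by
  refine exists_strongConvexOn_interpolating (by positivity) _ y
    (fun i => ⟪gradient f (y i), y i⟫ - f (y i)) fun i j => ?_
  have := hconv.add_inner_gradient_add_sq_le hL hf hlip (y j) (y i)
  rw [inner_sub_right] at this ⊢
  rw [norm_sub_rev, real_inner_comm (gradient f (y j)), real_inner_comm (gradient f (y i))]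
  linarith

lemma StrongConvexOn.exists_convexOn_lipschitz_gradient [FiniteDimensional ℝ E] {g : E → ℝ}
    {m : ℝ} {ι : Type*} [Nonempty ι] (hg : StrongConvexOn univ m g) (hm : 0 < m) (y u : ι → E)
    (hsub : ∀ i z, g (u i) + ⟪y i, z - u i⟫ ≤ g z) :
    ∃ f : E → ℝ, ConvexOn ℝ univ f ∧ Differentiable ℝ f ∧
      (∀ y₁ y₂, ‖gradient f y₂ - gradient f y₁‖ ≤ m⁻¹ * ‖y₂ - y₁‖) ∧
      ∀ i, gradient f (y i) = u i := by
  obtain ⟨i₀⟩ := ‹Nonempty ι›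
  choose P hP using hg.exists_add_inner_le hm (hsub i₀)
  have hlip : ∀ x₁ x₂, ‖P x₂ - P x₁‖ ≤ m⁻¹ * ‖x₂ - x₁‖ := fun x₁ x₂ => by
    rw [le_inv_mul_iff₀ hm]
    exact hg.mul_norm_sub_le_norm_sub (hP x₁) (hP x₂)
  have hgrad x := (hasGradientAt_legendreTransform hP hlip x).gradient
  refine ⟨legendreTransform g P,
    convexOn_univ_of_forall_add_inner_le (legendreTransform_add_inner_le hP),
    fun x => (hasGradientAt_legendreTransform hP hlip x).differentiableAt,
    fun x₁ x₂ => by simpa only [hgrad] using hlip x₁ x₂, fun i => ?_⟩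
  -- strong convexity makes the point with subgradient `y i` unique
  have huniq := hg.mul_norm_sub_le_norm_sub (hsub i) (hP (y i))
  rw [sub_self, norm_zero] at huniq
  rw [hgrad, ← sub_eq_zero, ← norm_le_zero_iff]
  exact nonpos_of_mul_nonpos_right huniq hm

end

theorem s0L_interpolable_iff_swapped_s1L_inf_interpolable
    {d : ℕ} {ι : Type*} [Fintype ι] (L : ℝ) (hL : 0 < L)
    (y u : ι → EuclideanSpace ℝ (Fin d)) :
    (∃ f : EuclideanSpace ℝ (Fin d) → ℝ, ConvexOn ℝ Set.univ f ∧ Differentiable ℝ f ∧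
        (∀ y₁ y₂, ‖gradient f y₂ - gradient f y₁‖ ≤ L * ‖y₂ - y₁‖) ∧
        ∀ i, gradient f (y i) = u i) ↔
      (∃ g : EuclideanSpace ℝ (Fin d) → ℝ, StronglyConvexFun (1 / L) g ∧
        ∀ i, IsSubgradientAt g (y i) (u i)) := by
  rcases isEmpty_or_nonempty ι with hι | hι
  · refine iff_of_true ⟨fun _ => 0, convexOn_const 0 convex_univ, differentiable_const 0,
      fun _ _ => by simp only [gradient_fun_const, sub_zero, norm_zero]; positivity,
      isEmptyElim⟩ ⟨fun z => 1 / L / 2 * ‖z‖ ^ 2, ?_, isEmptyElim⟩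
    simpa [StronglyConvexFun] using convexOn_const 0 convex_univ
  constructor
  · rintro ⟨f, hconv, hf, hlip, hgrad⟩
    obtain ⟨g, hg, hsub⟩ := hconv.exists_strongConvexOn_interpolating_gradient hL hf hlip y
    exact ⟨g, strongConvexOn_iff_convex.mp hg, fun i => hgrad i ▸ hsub i⟩
  · rintro ⟨g, hg, hsub⟩
    obtain ⟨f, hconv, hf, hlip, hgrad⟩ :=
      (strongConvexOn_iff_convex.mpr hg).exists_convexOn_lipschitz_gradient (by positivity) y u hsub
    exact ⟨f, hconv, hf, by simpa only [one_div, inv_inv] using hlip, hgrad⟩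
end

section
/- (Lossless S-procedure.) Let M_0, M_1, …, M_L be real symmetric ℓ×ℓ matrices and suppose d ≥ ℓ. Assume there exists η̄ ∈ ℝ^{ℓd} with σ_{M_i}(η̄) ≥ 0 for i = 1, …, L such that, writing η̄ = (η̄_1ᵀ, …, η̄_ℓᵀ)ᵀ with each η̄_j ∈ ℝ^d, the d×ℓ matrix B := [η̄_1, …, η̄_ℓ] has rank ℓ. If for every nonzero η ∈ ℝ^{ℓd} the conditions σ_{M_i}(η) ≥ 0 for i = 1, …, L imply σ_{M_0}(η) ≥ 0, then there exist nonnegative scalars λ_1, …, λ_L such that M_0 − Σ_{i=1}^{L} λ_i M_i is positive semidefinite. -/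
open Matrix Kronecker Filter Metric

/-!
Let `B̄ = [η̄₁, …, η̄_ℓ]` and `Ḡ = B̄ᵀ B̄`, so that `σ_X(η̄) = tr (X Ḡ)`. The rank condition
makes `Ḡ` invertible, hence `X ↦ tr (X Ḡ)` is strictly positive on nonzero PSD matrices and nonnegative on
the `Mᵢ`. This makes the cone `K = PSD + cone {Mᵢ}` closed: by Carathéodory's reduction `K` is a
finite union of such cones whose generators satisfy no nonnegative relation, and for each of those
the map `(P, λ) ↦ P + ∑ λᵢ Mᵢ` vanishes only at `0` on the closed cone of admissible `(P, λ)`, so by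
compactness of the unit sphere its image is closed.

If `M₀ ∉ K`, a separating functional is `X ↦ tr (X G)` on symmetric matrices for some PSD `G`,
which for `d ≥ ℓ` is a Gram matrix `Bᵀ B` with `B` of size `d × ℓ`. Then `η = vec B` satisfies
every constraint `σ_{Mᵢ}(η) = tr (Mᵢ G) ≥ 0` but has `σ_{M₀}(η) < 0`.
-/

/-- The quadratic form `σ_M(η) = ηᵀ (M ⊗ I_d) η` on `ℝ^{ℓd}`. -/
def sigmaQ {ℓ d : ℕ} (M : Matrix (Fin ℓ) (Fin ℓ) ℝ) (η : Fin ℓ × Fin d → ℝ) : ℝ :=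
  η ⬝ᵥ ((M ⊗ₖ (1 : Matrix (Fin d) (Fin d) ℝ)).mulVec η)

section ConeImage

variable {E F : Type*} [NormedAddCommGroup E] [NormedSpace ℝ E] [FiniteDimensional ℝ E]
  [NormedAddCommGroup F] [NormedSpace ℝ F]

lemma LinearMap.exists_mul_norm_le_norm_of_cone (f : E →ₗ[ℝ] F) {C : Set E} (hC : IsClosed C)
    (hCsmul : ∀ x ∈ C, ∀ t : ℝ, 0 < t → t • x ∈ C) (hker : ∀ x ∈ C, f x = 0 → x = 0) :
    ∃ c > 0, ∀ x ∈ C, c * ‖x‖ ≤ ‖f x‖ := by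
  obtain ⟨c, hc, hcS⟩ := ((isCompact_sphere (0 : E) 1).inter_left hC).exists_forall_le'
    f.continuous_of_finiteDimensional.norm.continuousOn (a := 0) fun x ⟨hxC, hx1⟩ =>
      norm_pos_iff.2 fun hfx => by simp [hker x hxC hfx] at hx1
  refine ⟨c, hc, fun x hxC => ?_⟩
  rcases eq_or_ne x 0 with rfl | hx0
  · simp
  have hxn : 0 < ‖x‖ := norm_pos_iff.2 hx0
  have := hcS (‖x‖⁻¹ • x) ⟨hCsmul x hxC _ (inv_pos.2 hxn), by simp [norm_smul, hxn.ne']⟩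
  rw [map_smul, norm_smul, norm_inv, norm_norm, ← div_eq_inv_mul, le_div_iff₀ hxn] at this
  linarith

theorem IsClosed.linearMap_image_of_cone (f : E →ₗ[ℝ] F) {C : Set E} (hC : IsClosed C)
    (hCsmul : ∀ x ∈ C, ∀ t : ℝ, 0 < t → t • x ∈ C) (hker : ∀ x ∈ C, f x = 0 → x = 0) :
    IsClosed (f '' C) := by
  obtain ⟨c, hc, hbound⟩ := f.exists_mul_norm_le_norm_of_cone hC hCsmul hker
  refine isClosed_of_closure_subset fun y hy => ?_
  obtain ⟨u, hu, hlim⟩ := mem_closure_iff_seq_limit.1 hy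
  choose x hxC hxu using hu
  obtain ⟨R, hR⟩ := (isBounded_range_of_tendsto u hlim).subset_closedBall 0
  have hx : ∀ n, x n ∈ closedBall (0 : E) (R / c) := fun n => by
    have := (hbound _ (hxC n)).trans ((hxu n).symm ▸ mem_closedBall_zero_iff.1 (hR ⟨n, rfl⟩))
    rw [mem_closedBall_zero_iff, le_div_iff₀ hc]
    linarith
  obtain ⟨a, -, φ, hφ, hxa⟩ := tendsto_subseq_of_bounded isBounded_closedBall hx
  refine ⟨a, hC.mem_of_tendsto hxa (Eventually.of_forall fun n => hxC _), ?_⟩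
  refine tendsto_nhds_unique ((f.continuous_of_finiteDimensional.tendsto a).comp hxa) ?_
  simpa [Function.comp_def, hxu] using hlim.comp hφ.tendsto_atTop

end ConeImage

section AddCone

variable {E ι : Type*} [AddCommGroup E] [Module ℝ E] [Fintype ι]

def addCone (C : Set E) (M : ι → E) (s : Finset ι) : Set E :=
  {x | ∃ p ∈ C, ∃ lam : ι → ℝ, 0 ≤ lam ∧ (∀ i ∉ s, lam i = 0) ∧ p + ∑ i, lam i • M i = x}

lemma subset_addCone (C : Set E) (M : ι → E) (s : Finset ι) : C ⊆ addCone C M s :=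
  fun p hp => ⟨p, hp, 0, le_rfl, fun _ _ => rfl, by simp⟩

lemma apply_mem_addCone [DecidableEq ι] {C : Set E} (hC : 0 ∈ C) (M : ι → E) {s : Finset ι} {i : ι}
    (hi : i ∈ s) : M i ∈ addCone C M s := by
  refine ⟨0, hC, Pi.single i 1, Pi.single_nonneg.2 zero_le_one, fun j hj => ?_, by simp⟩
  exact Pi.single_eq_of_ne (ne_of_mem_of_not_mem hi hj).symm _

lemma addCone_mono (C : Set E) (M : ι → E) {s t : Finset ι} (hst : s ⊆ t) :
    addCone C M s ⊆ addCone C M t := by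
  rintro x ⟨p, hp, lam, hlam, hs, rfl⟩
  exact ⟨p, hp, lam, hlam, fun i hi => hs i fun h => hi (hst h), rfl⟩

/-- Carathéodory's reduction: subtract from `lam` the largest multiple of the relation `μ` that
keeps all coefficients nonnegative; the coefficient attaining the minimum of `lam i / μ i` drops
out. -/
lemma addCone_subset_biUnion_erase [DecidableEq ι] (C : Set E) (M : ι → E) {s : Finset ι}
    {μ : ι → ℝ} (hμ : 0 ≤ μ) (hμs : ∀ i ∉ s, μ i = 0) (hμ0 : μ ≠ 0) (hμM : ∑ i, μ i • M i = 0) :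
    addCone C M s ⊆ ⋃ j ∈ s, addCone C M (s.erase j) := by
  rintro x ⟨p, hp, lam, hlam, hs, rfl⟩
  obtain ⟨k, hk⟩ := Function.ne_iff.1 hμ0
  obtain ⟨j, hj, hjmin⟩ := Finset.exists_min_image (Finset.univ.filter fun i => 0 < μ i)
    (fun i => lam i / μ i) ⟨k, by simpa using (hμ k).lt_of_ne' hk⟩
  rw [Finset.mem_filter] at hj
  set t := lam j / μ j
  have hjs : j ∈ s := by_contra fun h => hj.2.ne' (hμs j h)
  refine Set.mem_biUnion hjs ⟨p, hp, lam - t • μ, fun i => ?_, fun i hi => ?_, ?_⟩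
  · rcases (hμ i).lt_or_eq with hμi | hμi
    · have := hjmin i (by simpa using hμi)
      rw [div_le_div_iff₀ hj.2 hμi] at this
      simp only [Pi.sub_apply, Pi.smul_apply, smul_eq_mul, Pi.zero_apply, sub_nonneg]
      rwa [div_mul_eq_mul_div, div_le_iff₀ hj.2]
    · simpa [← hμi] using hlam i
  · rcases eq_or_ne i j with rfl | hij
    · simp [t, hj.2.ne']
    · have his : i ∉ s := fun h => hi (Finset.mem_erase.2 ⟨hij, h⟩)
      simp [hs i his, hμs i his]
  · simp [sub_smul, Finset.sum_sub_distrib, mul_smul, ← Finset.smul_sum, hμM]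

end AddCone

section ClosedAddCone

variable {E ι : Type*} [NormedAddCommGroup E] [NormedSpace ℝ E] [FiniteDimensional ℝ E] [Fintype ι]

theorem isClosed_addCone_of_no_nonneg_relation {C : Set E} (hC : IsClosed C)
    (hCsmul : ∀ x ∈ C, ∀ t : ℝ, 0 < t → t • x ∈ C) (φ : E →ₗ[ℝ] ℝ)
    (hφC : ∀ x ∈ C, x ≠ 0 → 0 < φ x) (M : ι → E) (hφM : ∀ i, 0 ≤ φ (M i)) {s : Finset ι}
    (hs : ∀ μ : ι → ℝ, 0 ≤ μ → (∀ i ∉ s, μ i = 0) → ∑ i, μ i • M i = 0 → μ = 0) :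
    IsClosed (addCone C M s) := by
  set f := LinearMap.fst ℝ E (ι → ℝ) + Fintype.linearCombination ℝ M ∘ₗ LinearMap.snd ℝ E (ι → ℝ)
  have hf : ∀ p lam, f (p, lam) = p + ∑ i, lam i • M i := fun p lam => by
    simp [f, Fintype.linearCombination_apply]
  set D : Set (ι → ℝ) := {lam | 0 ≤ lam ∧ ∀ i ∉ s, lam i = 0}
  have hD : addCone C M s = f '' (C ×ˢ D) := by
    ext x
    simp [addCone, D, hf, and_assoc]
  have hDclosed : IsClosed D := by
    simp only [D, Set.ofPred_and, Set.ofPred_forall]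
    exact isClosed_Ici.inter <| isClosed_iInter fun i =>
      isClosed_iInter fun _ => isClosed_eq (continuous_apply i) continuous_const
  rw [hD]
  refine IsClosed.linearMap_image_of_cone f (hC.prod hDclosed) ?_ ?_
  · rintro ⟨p, lam⟩ ⟨hp, hlam, hlams⟩ t ht
    exact ⟨hCsmul p hp t ht, smul_nonneg ht.le hlam,
      fun i hi => mul_eq_zero_of_right t (hlams i hi)⟩
  · rintro ⟨p, lam⟩ ⟨hp, hlam, hlams⟩ h
    rw [hf] at h
    have hφp : 0 ≤ φ p := by
      rcases eq_or_ne p 0 with rfl | hp0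
      · simp
      · exact (hφC p hp hp0).le
    have hφsum : 0 ≤ ∑ i, lam i * φ (M i) :=
      Finset.sum_nonneg fun i _ => mul_nonneg (hlam i) (hφM i)
    have hφh : φ p + ∑ i, lam i * φ (M i) = 0 := by simpa using congrArg φ h
    have hp0 : p = 0 := by_contra fun hp0 => (hφC p hp hp0).ne' (by linarith)
    have hlam0 : lam = 0 := hs lam hlam hlams (by simpa [hp0] using h)
    simp [hp0, hlam0]

theorem isClosed_addCone [DecidableEq ι] {C : Set E} (hC : IsClosed C)
    (hCsmul : ∀ x ∈ C, ∀ t : ℝ, 0 < t → t • x ∈ C) (φ : E →ₗ[ℝ] ℝ)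
    (hφC : ∀ x ∈ C, x ≠ 0 → 0 < φ x) (M : ι → E) (hφM : ∀ i, 0 ≤ φ (M i)) (s : Finset ι) :
    IsClosed (addCone C M s) := by
  induction s using Finset.strongInduction with
  | _ s ih =>
  by_cases hdep : ∃ μ : ι → ℝ, 0 ≤ μ ∧ (∀ i ∉ s, μ i = 0) ∧ μ ≠ 0 ∧ ∑ i, μ i • M i = 0
  · obtain ⟨μ, hμ, hμs, hμ0, hμM⟩ := hdep
    have : addCone C M s = ⋃ j ∈ s, addCone C M (s.erase j) :=
      (addCone_subset_biUnion_erase C M hμ hμs hμ0 hμM).antisymm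
        (Set.iUnion₂_subset fun j _ => addCone_mono C M (s.erase_subset j))
    rw [this]
    exact isClosed_biUnion_finset fun j hj => ih _ (Finset.erase_ssubset hj)
  · exact isClosed_addCone_of_no_nonneg_relation hC hCsmul φ hφC M hφM
      fun μ hμ hμs hμM => by_contra fun h => hdep ⟨μ, hμ, hμs, h, hμM⟩

end ClosedAddCone

namespace Matrix

variable {m n : Type*} [Fintype m] [Fintype n]

theorem isClosed_setOf_posSemidef : IsClosed {A : Matrix n n ℝ | A.PosSemidef} := by
  simp only [posSemidef_iff_dotProduct_mulVec, Set.ofPred_and, Set.ofPred_forall]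
  exact (isClosed_eq continuous_id.matrix_conjTranspose continuous_id).inter <| isClosed_iInter
    fun x => isClosed_le continuous_const
      (continuous_const.dotProduct (continuous_id.matrix_mulVec continuous_const))

theorem isUnit_transpose_mul_self_of_rank_eq [DecidableEq n] {B : Matrix m n ℝ}
    (h : B.rank = Fintype.card n) : IsUnit (Bᵀ * B) := by
  rw [← rank_transpose_mul_self] at h
  rw [← mulVec_surjective_iff_isUnit, ← coe_mulVecLin, ← LinearMap.range_eq_top]
  exact Submodule.eq_top_of_finrank_eq (by simpa [rank] using h)

theorem PosSemidef.trace_mul_transpose_mul_self_pos [DecidableEq n] {P : Matrix n n ℝ}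
    (hP : P.PosSemidef) (hP0 : P ≠ 0) {B : Matrix m n ℝ} (hB : IsUnit (Bᵀ * B)) :
    0 < (P * (Bᵀ * B)).trace := by
  have hBPB : (B * P * Bᵀ).PosSemidef := by
    simpa using hP.mul_mul_conjTranspose_same B
  rw [← Matrix.mul_assoc, trace_mul_comm, ← Matrix.mul_assoc]
  refine hBPB.trace_nonneg.lt_of_ne' fun h => hP0 ?_
  have h0 : Bᵀ * B * P * (Bᵀ * B) = 0 := by
    rw [show Bᵀ * B * P * (Bᵀ * B) = Bᵀ * (B * P * Bᵀ) * B by simp only [Matrix.mul_assoc],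
      hBPB.trace_eq_zero_iff.1 h, Matrix.mul_zero, Matrix.zero_mul]
  exact hB.mul_right_eq_zero.1 (hB.mul_left_eq_zero.1 h0)

theorem PosSemidef.exists_transpose_mul_self_eq {G : Matrix n n ℝ} (hG : G.PosSemidef)
    (h : Fintype.card n ≤ Fintype.card m) : ∃ B : Matrix m n ℝ, Bᵀ * B = G := by
  classical
  obtain ⟨A, rfl⟩ : ∃ A : Matrix n n ℝ, G = star A * A := by
    open scoped MatrixOrder Matrix.Norms.L2Operator in
    exact CStarAlgebra.nonneg_iff_eq_star_mul_self.mp hG.nonneg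
  obtain ⟨e⟩ := Function.Embedding.nonempty_of_card_le h
  set E : Matrix n m ℝ := of fun i r => if e i = r then 1 else 0
  have hE : E * Eᵀ = 1 := by
    ext i j
    simp [E, mul_apply, one_apply, e.injective.eq_iff, eq_comm]
  exact ⟨Eᵀ * A, by simp [Matrix.mul_assoc, ← Matrix.mul_assoc E, hE, star_eq_conjTranspose]⟩

theorem _root_.LinearMap.exists_eq_trace_mul {R : Type*} [CommSemiring R] [DecidableEq n]
    (f : Matrix n n R →ₗ[R] R) : ∃ Y : Matrix n n R, ∀ X, f X = (X * Y).trace := by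
  refine ⟨of fun j i => f (single i j 1), fun X => ?_⟩
  conv_lhs => rw [matrix_eq_sum_single X]
  simp only [map_sum, trace, diag_apply, mul_apply, of_apply]
  refine Finset.sum_congr rfl fun i _ => Finset.sum_congr rfl fun j _ => ?_
  rw [show single i j (X i j) = X i j • single i j 1 by simp, map_smul, smul_eq_mul]

theorem exists_posSemidef_forall_isSymm_eq_trace_mul [DecidableEq n] (f : Matrix n n ℝ →ₗ[ℝ] ℝ)
    (hf : ∀ P : Matrix n n ℝ, P.PosSemidef → 0 ≤ f P) :
    ∃ G : Matrix n n ℝ, G.PosSemidef ∧ ∀ X : Matrix n n ℝ, X.IsSymm → f X = (X * G).trace := by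
  obtain ⟨Y, hY⟩ := f.exists_eq_trace_mul
  set G := (2⁻¹ : ℝ) • (Y + Yᵀ)
  have hG : ∀ X : Matrix n n ℝ, X.IsSymm → f X = (X * G).trace := fun X hX => by
    have : (X * Yᵀ).trace = (X * Y).trace := by
      rw [← trace_transpose, transpose_mul, transpose_transpose, hX.eq, trace_mul_comm]
    rw [hY, Matrix.mul_smul, Matrix.mul_add, trace_smul, trace_add, this]
    ring
  refine ⟨G, ?_, hG⟩
  refine posSemidef_iff_dotProduct_mulVec.2 ⟨?_, fun v => ?_⟩
  · simp [G, IsHermitian, add_comm]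
  · have hv := hf (vecMulVec v v) (by simpa using posSemidef_vecMulVec_self_star v)
    rwa [hG (vecMulVec v v) (IsSymm.ext fun i j => mul_comm (v j) (v i)), vecMulVec_mul,
      trace_vecMulVec, dotProduct_comm, ← dotProduct_mulVec, ← star_trivial v] at hv

variable {ι : Type*} [Fintype ι]

def psdAddCone (M : ι → Matrix n n ℝ) : PointedCone ℝ (Matrix n n ℝ) where
  carrier := addCone {P | P.PosSemidef} M Finset.univ
  add_mem' := by
    rintro _ _ ⟨P, hP, lam, hlam, -, rfl⟩ ⟨Q, hQ, mu, hmu, -, rfl⟩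
    refine ⟨P + Q, hP.add hQ, lam + mu, add_nonneg hlam hmu, by simp, ?_⟩
    simp only [Pi.add_apply, add_smul, Finset.sum_add_distrib]
    abel
  zero_mem' := ⟨0, PosSemidef.zero, 0, le_rfl, fun _ _ => rfl, by simp⟩
  smul_mem' := by
    rintro c _ ⟨P, hP, lam, hlam, -, rfl⟩
    refine ⟨c • P, hP.smul c.2, (c : ℝ) • lam, smul_nonneg c.2 hlam, by simp, ?_⟩
    simp [smul_add, Finset.smul_sum, mul_smul]

open scoped Matrix.Norms.Elementwise in
theorem isClosed_psdAddCone [DecidableEq n] [DecidableEq ι] (M : ι → Matrix n n ℝ)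
    {B : Matrix m n ℝ} (hB : IsUnit (Bᵀ * B)) (hM : ∀ i, 0 ≤ (M i * (Bᵀ * B)).trace) :
    IsClosed (psdAddCone M : Set (Matrix n n ℝ)) :=
  isClosed_addCone isClosed_setOf_posSemidef (fun _ hP _ ht => hP.smul ht.le)
    (traceLinearMap n ℝ ℝ ∘ₗ LinearMap.mulRight ℝ (Bᵀ * B))
    (fun _ hP hP0 => hP.trace_mul_transpose_mul_self_pos hP0 hB) M hM _

theorem exists_separating_of_notMem_psdAddCone [DecidableEq n] [DecidableEq ι]
    (M : ι → Matrix n n ℝ) {B : Matrix m n ℝ} (hB : IsUnit (Bᵀ * B))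
    (hM : ∀ i, 0 ≤ (M i * (Bᵀ * B)).trace) {X : Matrix n n ℝ} (hX : X ∉ psdAddCone M) :
    ∃ f : Matrix n n ℝ →ₗ[ℝ] ℝ, (∀ Y ∈ psdAddCone M, 0 ≤ f Y) ∧ f X < 0 := by
  -- `Matrix` does not inherit this instance from the Pi type.
  have : LocallyConvexSpace ℝ (Matrix n n ℝ) := inferInstanceAs (LocallyConvexSpace ℝ (n → n → ℝ))
  obtain ⟨f, hf, hfX⟩ :=
    ProperCone.hyperplane_separation_point ⟨psdAddCone M, isClosed_psdAddCone M hB hM⟩ hX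
  exact ⟨f.toLinearMap, hf, hfX⟩

end Matrix

theorem sigmaQ_vec {ℓ d : ℕ} (M : Matrix (Fin ℓ) (Fin ℓ) ℝ) (B : Matrix (Fin d) (Fin ℓ) ℝ) :
    sigmaQ M (vec B) = (M * (Bᵀ * B)).trace := by
  rw [sigmaQ, kronecker_mulVec_vec, vec_dotProduct_vec, Matrix.one_mul, ← Matrix.mul_assoc,
    ← trace_transpose, transpose_mul, transpose_transpose, transpose_mul, transpose_transpose]

theorem lossless_s_procedure
    {ℓ d L : ℕ} (hd : ℓ ≤ d)
    (M₀ : Matrix (Fin ℓ) (Fin ℓ) ℝ) (M : Fin L → Matrix (Fin ℓ) (Fin ℓ) ℝ)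
    (hM₀ : M₀.IsSymm) (hM : ∀ i, (M i).IsSymm)
    (ηbar : Fin ℓ × Fin d → ℝ)
    (hηbar : ∀ i, 0 ≤ sigmaQ (M i) ηbar)
    (hrank : (Matrix.of fun (r : Fin d) (c : Fin ℓ) => ηbar (c, r)).rank = ℓ)
    (himp : ∀ η : Fin ℓ × Fin d → ℝ, η ≠ 0 →
      (∀ i, 0 ≤ sigmaQ (M i) η) → 0 ≤ sigmaQ M₀ η) :
    ∃ lam : Fin L → ℝ, (∀ i, 0 ≤ lam i) ∧ (M₀ - ∑ i, lam i • M i).PosSemidef := by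
  set Bbar : Matrix (Fin d) (Fin ℓ) ℝ := Matrix.of fun r c => ηbar (c, r)
  by_contra hno
  have hM₀K : M₀ ∉ psdAddCone M := by
    rintro ⟨P, hP, lam, hlam, -, hP'⟩
    exact hno ⟨lam, hlam, by rwa [← hP', add_sub_cancel_right]⟩
  obtain ⟨f, hfK, hfM₀⟩ := exists_separating_of_notMem_psdAddCone M
    (isUnit_transpose_mul_self_of_rank_eq (B := Bbar) (by simpa using hrank))
    (fun i => sigmaQ_vec (M i) Bbar ▸ hηbar i) hM₀K
  obtain ⟨G, hG, hfG⟩ := exists_posSemidef_forall_isSymm_eq_trace_mul f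
    fun P hP => hfK P (subset_addCone _ M _ hP)
  obtain ⟨B, rfl⟩ := hG.exists_transpose_mul_self_eq (m := Fin d) (by simpa using hd)
  have hσ : ∀ X, X.IsSymm → sigmaQ X (vec B) = f X := fun X hX => by
    rw [sigmaQ_vec, hfG X hX]
  have hB0 : vec B ≠ 0 := fun h => by
    have := hσ M₀ hM₀
    simp [h, sigmaQ] at this
    linarith
  have := himp (vec B) hB0 fun i =>
    (hσ _ (hM i)).symm ▸ hfK _ (apply_mem_addCone PosSemidef.zero M (Finset.mem_univ i))
  linarith [hσ M₀ hM₀]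
end

section
/- Let H be a real R×R matrix. Then H is doubly hyperdominant with zero excess if and only if there exist finitely many nonnegative scalars λ_1, …, λ_k and R×R permutation matrices P_1, …, P_k such that H = Σ_{i=1}^k λ_i (I_R − P_i). -/
open Matrix

/-! The diagonal of a doubly hyperdominant matrix `H` is nonnegative, so `c = trace H` dominates
it and `c • 1 - H` is a nonnegative matrix whose row and column sums all equal `c` when the excess
is zero, i.e. `c` times a doubly stochastic matrix. Birkhoff's theorem writes that matrix as a
convex combination `∑ w σ • P σ` of permutation matrices, whence
`H = c • 1 - c • ∑ w σ • P σ = ∑ (c * w σ) • (1 - P σ)`. Conversely, each `1 - P` has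
nonpositive off-diagonal entries and zero line sums, and both properties survive conic
combinations. -/

/-- A real square matrix is doubly hyperdominant if its off-diagonal entries are
nonpositive and all row and column sums are nonnegative. -/
def IsDoublyHyperdominant {R : ℕ} (H : Matrix (Fin R) (Fin R) ℝ) : Prop :=
  (∀ i j, i ≠ j → H i j ≤ 0) ∧ (∀ i, 0 ≤ ∑ j, H i j) ∧ (∀ j, 0 ≤ ∑ i, H i j)

/-- Doubly hyperdominant with zero excess: in addition all row and column sums vanish. -/
def IsDoublyHyperdominantZeroExcess {R : ℕ} (H : Matrix (Fin R) (Fin R) ℝ) : Prop :=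
  IsDoublyHyperdominant H ∧ (∀ i, ∑ j, H i j = 0) ∧ (∀ j, ∑ i, H i j = 0)

/-- A permutation matrix: a square 0–1 matrix with exactly one 1 in each row and column. -/
def IsPermutationMatrix {R : ℕ} (P : Matrix (Fin R) (Fin R) ℝ) : Prop :=
  (∀ i j, P i j = 0 ∨ P i j = 1) ∧ (∀ i, ∑ j, P i j = 1) ∧ (∀ j, ∑ i, P i j = 1)

lemma IsPermutationMatrix.mem_doublyStochastic {R : ℕ} {P : Matrix (Fin R) (Fin R) ℝ}
    (hP : IsPermutationMatrix P) : P ∈ doublyStochastic ℝ (Fin R) :=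
  mem_doublyStochastic_iff_sum.2
    ⟨fun i j => (hP.1 i j).elim (·.ge) (fun h => h ▸ zero_le_one), hP.2⟩

lemma isPermutationMatrix_permMatrix {R : ℕ} (σ : Equiv.Perm (Fin R)) :
    IsPermutationMatrix (σ.permMatrix ℝ) := by
  obtain ⟨-, hrow, hcol⟩ :=
    mem_doublyStochastic_iff_sum.1 (permMatrix_mem_doublyStochastic (R := ℝ) (σ := σ))
  refine ⟨fun i j => ?_, hrow, hcol⟩
  simp only [Equiv.Perm.permMatrix, PEquiv.toMatrix_apply]
  split_ifs <;> simp

namespace IsDoublyHyperdominant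

variable {R : ℕ} {H : Matrix (Fin R) (Fin R) ℝ}

lemma diag_nonneg (hH : IsDoublyHyperdominant H) (i : Fin R) : 0 ≤ H i i := by
  have hoff : ∑ j ∈ Finset.univ.erase i, H i j ≤ 0 :=
    Finset.sum_nonpos fun j hj => hH.1 i j (Finset.ne_of_mem_erase hj).symm
  have hrow := hH.2.1 i
  rw [← Finset.add_sum_erase _ _ (Finset.mem_univ i)] at hrow
  linarith

lemma diag_le_trace (hH : IsDoublyHyperdominant H) (i : Fin R) : H i i ≤ H.trace :=
  Finset.single_le_sum (fun j _ => hH.diag_nonneg j) (Finset.mem_univ i)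

lemma trace_nonneg (hH : IsDoublyHyperdominant H) : 0 ≤ H.trace :=
  Finset.sum_nonneg fun i _ => hH.diag_nonneg i

end IsDoublyHyperdominant

section ZeroExcess

variable {R : ℕ}

lemma isDoublyHyperdominantZeroExcess_iff {H : Matrix (Fin R) (Fin R) ℝ} :
    IsDoublyHyperdominantZeroExcess H ↔
      (∀ i j, i ≠ j → H i j ≤ 0) ∧ (∀ i, ∑ j, H i j = 0) ∧ (∀ j, ∑ i, H i j = 0) :=
  ⟨fun ⟨⟨hoff, _⟩, hrow, hcol⟩ => ⟨hoff, hrow, hcol⟩, fun ⟨hoff, hrow, hcol⟩ =>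
    ⟨⟨hoff, fun i => (hrow i).ge, fun j => (hcol j).ge⟩, hrow, hcol⟩⟩

lemma isDoublyHyperdominantZeroExcess_one_sub {P : Matrix (Fin R) (Fin R) ℝ}
    (hP : P ∈ doublyStochastic ℝ (Fin R)) :
    IsDoublyHyperdominantZeroExcess (1 - P) := by
  obtain ⟨hnonneg, hrow, hcol⟩ := mem_doublyStochastic_iff_sum.1 hP
  refine isDoublyHyperdominantZeroExcess_iff.2 ⟨fun i j hij => ?_, fun i => ?_, fun j => ?_⟩
  · simpa [one_apply_ne hij] using hnonneg i j
  · simp [Finset.sum_sub_distrib, one_apply, hrow]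
  · simp [Finset.sum_sub_distrib, one_apply, hcol]

lemma IsDoublyHyperdominantZeroExcess.add {H K : Matrix (Fin R) (Fin R) ℝ}
    (hH : IsDoublyHyperdominantZeroExcess H) (hK : IsDoublyHyperdominantZeroExcess K) :
    IsDoublyHyperdominantZeroExcess (H + K) := by
  obtain ⟨hHoff, hHrow, hHcol⟩ := isDoublyHyperdominantZeroExcess_iff.1 hH
  obtain ⟨hKoff, hKrow, hKcol⟩ := isDoublyHyperdominantZeroExcess_iff.1 hK
  refine isDoublyHyperdominantZeroExcess_iff.2 ⟨fun i j hij => ?_, fun i => ?_, fun j => ?_⟩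
  · simpa using add_nonpos (hHoff i j hij) (hKoff i j hij)
  · simp [Finset.sum_add_distrib, hHrow, hKrow]
  · simp [Finset.sum_add_distrib, hHcol, hKcol]

lemma IsDoublyHyperdominantZeroExcess.smul {H : Matrix (Fin R) (Fin R) ℝ}
    (hH : IsDoublyHyperdominantZeroExcess H) {c : ℝ} (hc : 0 ≤ c) :
    IsDoublyHyperdominantZeroExcess (c • H) := by
  obtain ⟨hoff, hrow, hcol⟩ := isDoublyHyperdominantZeroExcess_iff.1 hH
  refine isDoublyHyperdominantZeroExcess_iff.2 ⟨fun i j hij => ?_, fun i => ?_, fun j => ?_⟩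
  · simpa using mul_nonpos_of_nonneg_of_nonpos hc (hoff i j hij)
  · simp [← Finset.mul_sum, hrow]
  · simp [← Finset.mul_sum, hcol]

lemma isDoublyHyperdominantZeroExcess_zero :
    IsDoublyHyperdominantZeroExcess (0 : Matrix (Fin R) (Fin R) ℝ) :=
  isDoublyHyperdominantZeroExcess_iff.2 ⟨fun _ _ _ => le_rfl, by simp, by simp⟩

lemma isDoublyHyperdominantZeroExcess_sum_smul_one_sub {ι : Type*} (s : Finset ι)
    (c : ι → ℝ) (P : ι → Matrix (Fin R) (Fin R) ℝ) (hc : ∀ i ∈ s, 0 ≤ c i)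
    (hP : ∀ i ∈ s, P i ∈ doublyStochastic ℝ (Fin R)) :
    IsDoublyHyperdominantZeroExcess (∑ i ∈ s, c i • (1 - P i)) :=
  Finset.sum_induction _ _ (fun _ _ => IsDoublyHyperdominantZeroExcess.add)
    isDoublyHyperdominantZeroExcess_zero fun i hi =>
      (isDoublyHyperdominantZeroExcess_one_sub (hP i hi)).smul (hc i hi)

namespace IsDoublyHyperdominantZeroExcess

variable {H : Matrix (Fin R) (Fin R) ℝ}

lemma exists_trace_smul_one_sub_eq_trace_smul (hH : IsDoublyHyperdominantZeroExcess H) :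
    ∃ M ∈ doublyStochastic ℝ (Fin R), H.trace • 1 - H = H.trace • M := by
  obtain ⟨hoff, hrow, hcol⟩ := isDoublyHyperdominantZeroExcess_iff.1 hH
  refine (exists_mem_doublyStochastic_eq_smul_iff hH.1.trace_nonneg).2
    ⟨fun i j => ?_, fun i => ?_, fun j => ?_⟩
  · rcases eq_or_ne i j with rfl | hij
    · simpa using hH.1.diag_le_trace i
    · simpa [one_apply_ne hij] using hoff i j hij
  · simp [Finset.sum_sub_distrib, one_apply, hrow]
  · simp [Finset.sum_sub_distrib, one_apply, hcol]

lemma exists_eq_sum_smul_one_sub_permMatrix (hH : IsDoublyHyperdominantZeroExcess H) :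
    ∃ w : Equiv.Perm (Fin R) → ℝ, (∀ σ, 0 ≤ w σ) ∧
      H = ∑ σ, w σ • (1 - σ.permMatrix ℝ) := by
  obtain ⟨M, hM, hHM⟩ := hH.exists_trace_smul_one_sub_eq_trace_smul
  obtain ⟨w, hw_nonneg, hw_sum, rfl⟩ := exists_eq_sum_perm_of_mem_doublyStochastic hM
  refine ⟨fun σ => H.trace * w σ, fun σ => mul_nonneg hH.1.trace_nonneg (hw_nonneg σ), ?_⟩
  calc H = H.trace • 1 - (H.trace • 1 - H) := by abel
    _ = H.trace • (∑ σ, w σ) • 1 - H.trace • ∑ σ, w σ • σ.permMatrix ℝ := by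
      rw [hw_sum, one_smul, hHM]
    _ = ∑ σ, (H.trace * w σ) • (1 - σ.permMatrix ℝ) := by
      simp only [smul_sub, Finset.sum_sub_distrib, Finset.sum_smul, Finset.smul_sum, mul_smul]

end IsDoublyHyperdominantZeroExcess

end ZeroExcess

theorem doublyHyperdominantZeroExcess_iff_conic_combination
    {R : ℕ} (H : Matrix (Fin R) (Fin R) ℝ) :
    IsDoublyHyperdominantZeroExcess H ↔
      ∃ (k : ℕ) (lam : Fin k → ℝ) (P : Fin k → Matrix (Fin R) (Fin R) ℝ),
        (∀ i, 0 ≤ lam i) ∧ (∀ i, IsPermutationMatrix (P i)) ∧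
        H = ∑ i, lam i • ((1 : Matrix (Fin R) (Fin R) ℝ) - P i) := by
  constructor
  · intro hH
    obtain ⟨w, hw, hHw⟩ := hH.exists_eq_sum_smul_one_sub_permMatrix
    let e := (Fintype.equivFin (Equiv.Perm (Fin R))).symm
    refine ⟨_, w ∘ e, fun m => (e m).permMatrix ℝ, fun m => hw _,
      fun m => isPermutationMatrix_permMatrix _, ?_⟩
    rw [hHw, ← e.sum_comp]
    rfl
  · rintro ⟨k, lam, P, hlam, hP, rfl⟩
    exact isDoublyHyperdominantZeroExcess_sum_smul_one_sub _ _ _ (fun i _ => hlam i)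
      fun i _ => (hP i).mem_doublyStochastic
end

section
/- Let H be a real R×R doubly hyperdominant matrix with zero excess. Then there exist k ≤ R² − 2R + 1 nonnegative scalars λ_1, …, λ_k and R×R permutation matrices P_1, …, P_k such that H = Σ_{i=1}^k λ_i (I_R − P_i). -/
open Matrix

/-!
Adding a large multiple `s • 1` to `-H` gives a nonnegative matrix whose row and column sums all
equal `s`, so by Birkhoff's theorem it is a nonnegative combination of permutation matrices `P_σ`
with total weight `s`; hence `H` is a nonnegative combination of the matrices `1 - P_σ`. These lie
in the space of matrices with vanishing row and column sums, which has dimension `(R - 1)²` since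
such a matrix is determined by its top-left `(R - 1) × (R - 1)` block. Conic Carathéodory then
trims the combination to a linearly independent family, of at most `(R - 1)²` members.
-/

section ConicCaratheodory

variable {𝕜 E ι : Type*} [Field 𝕜] [LinearOrder 𝕜] [IsStrictOrderedRing 𝕜]
  [AddCommGroup E] [Module 𝕜 E] [DecidableEq ι] {v : ι → E} {s : Finset ι} {l : ι → 𝕜}

-- Move along the dependency `c` until the first coefficient `l j` hits zero.
lemma exists_nonneg_sum_erase_eq_of_sum_eq_zero (hl : ∀ i ∈ s, 0 ≤ l i) {c : ι → 𝕜}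
    (hc : ∑ i ∈ s, c i • v i = 0) (hpos : ∃ i ∈ s, 0 < c i) :
    ∃ j ∈ s, ∃ l' : ι → 𝕜, (∀ i ∈ s.erase j, 0 ≤ l' i) ∧
      ∑ i ∈ s.erase j, l' i • v i = ∑ i ∈ s, l i • v i := by
  obtain ⟨j, hj, hmin⟩ := Finset.exists_min_image (s.filter (0 < c ·)) (fun i => l i / c i)
    (by simpa [Finset.filter_nonempty_iff] using hpos)
  obtain ⟨hjs, hcj⟩ := Finset.mem_filter.mp hj
  set τ := l j / c j
  have hτ : 0 ≤ τ := div_nonneg (hl j hjs) hcj.le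
  refine ⟨j, hjs, fun i => l i - τ * c i, fun i hi => ?_, ?_⟩
  · have his := Finset.mem_of_mem_erase hi
    rcases lt_or_ge 0 (c i) with hci | hci
    · have := hmin i (Finset.mem_filter.mpr ⟨his, hci⟩)
      rw [le_div_iff₀ hci] at this
      linarith
    · nlinarith [hl i his]
  · have hlj : l j - τ * c j = 0 := by
      simp only [τ, div_mul_cancel₀ _ hcj.ne', sub_self]
    rw [Finset.sum_erase s (by simp only [hlj, zero_smul])]
    simp only [sub_smul, Finset.sum_sub_distrib, mul_smul, ← Finset.smul_sum, hc, smul_zero,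
      sub_zero]

lemma exists_nonneg_sum_erase_eq_of_not_linearIndepOn (hl : ∀ i ∈ s, 0 ≤ l i)
    (hs : ¬LinearIndepOn 𝕜 v (s : Set ι)) :
    ∃ j ∈ s, ∃ l' : ι → 𝕜, (∀ i ∈ s.erase j, 0 ≤ l' i) ∧
      ∑ i ∈ s.erase j, l' i • v i = ∑ i ∈ s, l i • v i := by
  obtain ⟨c, hc, i, hi, hci⟩ := not_linearIndepOn_finset_iff.mp hs
  rcases hci.lt_or_gt with hneg | hpos
  · refine exists_nonneg_sum_erase_eq_of_sum_eq_zero hl (c := -c) ?_ ⟨i, hi, by simpa⟩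
    simp [neg_smul, Finset.sum_neg_distrib, hc]
  · exact exists_nonneg_sum_erase_eq_of_sum_eq_zero hl hc ⟨i, hi, hpos⟩

theorem exists_linearIndepOn_nonneg_sum_eq (hl : ∀ i ∈ s, 0 ≤ l i) :
    ∃ t ⊆ s, LinearIndepOn 𝕜 v (t : Set ι) ∧ ∃ m : ι → 𝕜, (∀ i ∈ t, 0 ≤ m i) ∧
      ∑ i ∈ t, m i • v i = ∑ i ∈ s, l i • v i := by
  induction s using Finset.strongInduction generalizing l with
  | H s ih =>
    by_cases hs : LinearIndepOn 𝕜 v (s : Set ι)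
    · exact ⟨s, subset_rfl, hs, l, hl, rfl⟩
    obtain ⟨j, hj, l', hl', hsum⟩ := exists_nonneg_sum_erase_eq_of_not_linearIndepOn hl hs
    obtain ⟨t, hts, hli, m, hm, hmsum⟩ := ih _ (Finset.erase_ssubset hj) hl'
    exact ⟨t, hts.trans (Finset.erase_subset j s), hli, m, hm, hmsum.trans hsum⟩

end ConicCaratheodory

lemma Submodule.card_le_finrank_of_linearIndepOn {K V ι : Type*} [Field K] [AddCommGroup V]
    [Module K V] {W : Submodule K V} [FiniteDimensional K W] {v : ι → V} {t : Finset ι}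
    (hli : LinearIndepOn K v (t : Set ι)) (hvW : ∀ i ∈ t, v i ∈ W) :
    t.card ≤ Module.finrank K W := by
  let vW : t → W := fun i => ⟨v i, hvW i i.2⟩
  have : LinearIndependent K vW := LinearIndependent.of_comp W.subtype hli
  simpa using this.fintype_card_le_finrank

namespace Matrix

def zeroLineSums (K ι : Type*) [Semiring K] [Fintype ι] : Submodule K (Matrix ι ι K) where
  carrier := {M | (∀ i, ∑ j, M i j = 0) ∧ (∀ j, ∑ i, M i j = 0)}
  add_mem' {A B} hA hB := ⟨fun i => by simp [Finset.sum_add_distrib, hA.1 i, hB.1 i],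
    fun j => by simp [Finset.sum_add_distrib, hA.2 j, hB.2 j]⟩
  zero_mem' := ⟨fun _ => by simp, fun _ => by simp⟩
  smul_mem' c M hM := ⟨fun i => by simp [← Finset.mul_sum, hM.1 i],
    fun j => by simp [← Finset.mul_sum, hM.2 j]⟩

lemma one_sub_permMatrix_mem_zeroLineSums {K ι : Type*} [Ring K] [Fintype ι] [DecidableEq ι]
    (σ : Equiv.Perm ι) : 1 - σ.permMatrix K ∈ zeroLineSums K ι := by
  refine ⟨fun i => ?_, fun j => ?_⟩ <;>
    simp [Matrix.one_apply, Finset.sum_sub_distrib, PEquiv.toMatrix_apply, Equiv.toPEquiv_apply]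
  simp [← σ.eq_symm_apply, Finset.filter_eq']

lemma eq_zero_of_mem_zeroLineSums_of_submatrix_castSucc {K : Type*} [Semiring K] {n : ℕ}
    {M : Matrix (Fin (n + 1)) (Fin (n + 1)) K} (hM : M ∈ zeroLineSums K (Fin (n + 1)))
    (h : M.submatrix Fin.castSucc Fin.castSucc = 0) : M = 0 := by
  have hblock (i j : Fin n) : M i.castSucc j.castSucc = 0 := congrFun (congrFun h i) j
  have hlastCol (i : Fin n) : M i.castSucc (Fin.last n) = 0 := by
    simpa [Fin.sum_univ_castSucc, hblock] using hM.1 i.castSucc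
  have hlastRow (j : Fin n) : M (Fin.last n) j.castSucc = 0 := by
    simpa [Fin.sum_univ_castSucc, hblock] using hM.2 j.castSucc
  have hcorner : M (Fin.last n) (Fin.last n) = 0 := by
    simpa [Fin.sum_univ_castSucc, hlastRow] using hM.1 (Fin.last n)
  ext i j
  induction i using Fin.lastCases <;> induction j using Fin.lastCases <;>
    simp [hblock, hlastCol, hlastRow, hcorner]

lemma finrank_zeroLineSums_le (K : Type*) [Field K] (R : ℕ) :
    Module.finrank K (zeroLineSums K (Fin R)) ≤ (R - 1) ^ 2 := by
  cases R with
  | zero => simp [Submodule.finrank_eq_zero.mpr (Subsingleton.elim _ _)]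
  | succ n =>
    let trunc : zeroLineSums K (Fin (n + 1)) →ₗ[K] Matrix (Fin n) (Fin n) K :=
      { toFun M := (M : Matrix _ _ K).submatrix Fin.castSucc Fin.castSucc
        map_add' _ _ := rfl
        map_smul' _ _ := rfl }
    have htrunc : Function.Injective trunc := by
      rw [← LinearMap.ker_eq_bot, LinearMap.ker_eq_bot']
      intro M hM
      exact Subtype.ext (eq_zero_of_mem_zeroLineSums_of_submatrix_castSucc M.2 hM)
    simpa [sq, Module.finrank_matrix] using LinearMap.finrank_le_finrank_of_injective htrunc

end Matrix

section Birkhoff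

variable {K ι : Type*} [Field K] [LinearOrder K] [IsStrictOrderedRing K] [Fintype ι]
  [DecidableEq ι]

lemma exists_eq_sum_smul_permMatrix_of_sums_eq {M : Matrix ι ι K} {s : K} (hs : 0 ≤ s)
    (hM : ∀ i j, 0 ≤ M i j) (hrow : ∀ i, ∑ j, M i j = s) (hcol : ∀ j, ∑ i, M i j = s) :
    ∃ w : Equiv.Perm ι → K, (∀ σ, 0 ≤ w σ) ∧ ∑ σ, w σ = s ∧ ∑ σ, w σ • σ.permMatrix K = M := by
  obtain ⟨D, hD, rfl⟩ := (exists_mem_doublyStochastic_eq_smul_iff hs).mpr ⟨hM, hrow, hcol⟩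
  obtain ⟨w, hw, hw1, hwD⟩ := exists_eq_sum_perm_of_mem_doublyStochastic hD
  refine ⟨s • w, fun σ => mul_nonneg hs (hw σ), ?_, ?_⟩
  · simp [← Finset.mul_sum, hw1]
  · simp [mul_smul, ← Finset.smul_sum, hwD]

-- With `s = ∑ i, |H i i|`, the matrix `s • 1 - H` is nonnegative with all line sums `s`.
theorem exists_eq_sum_smul_one_sub_permMatrix {H : Matrix ι ι K}
    (hoff : ∀ i j, i ≠ j → H i j ≤ 0) (hrow : ∀ i, ∑ j, H i j = 0) (hcol : ∀ j, ∑ i, H i j = 0) :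
    ∃ w : Equiv.Perm ι → K, (∀ σ, 0 ≤ w σ) ∧ H = ∑ σ, w σ • (1 - σ.permMatrix K) := by
  set s := ∑ i, |H i i|
  have hs : 0 ≤ s := Finset.sum_nonneg fun i _ => abs_nonneg _
  have hnonneg (i j : ι) : 0 ≤ (s • 1 - H) i j := by
    rcases eq_or_ne i j with rfl | hij
    · have : H i i ≤ s := (le_abs_self _).trans
        (Finset.single_le_sum (fun k _ => abs_nonneg (H k k)) (Finset.mem_univ i))
      simpa using this
    · simpa [Matrix.one_apply_ne hij] using hoff i j hij
  obtain ⟨w, hw, hws, hwM⟩ := exists_eq_sum_smul_permMatrix_of_sums_eq hs hnonneg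
    (fun i => by simp [Finset.sum_sub_distrib, Matrix.one_apply, hrow i])
    (fun j => by simp [Finset.sum_sub_distrib, Matrix.one_apply, hcol j])
  refine ⟨w, hw, ?_⟩
  rw [← sub_sub_cancel (s • 1) H, ← hwM, ← hws]
  simp [smul_sub, Finset.sum_smul]

end Birkhoff

theorem dhd_zero_excess_conic_decomposition_short
    {R : ℕ} (H : Matrix (Fin R) (Fin R) ℝ)
    (hH : IsDoublyHyperdominantZeroExcess H) :
    ∃ (k : ℕ) (lam : Fin k → ℝ) (P : Fin k → Matrix (Fin R) (Fin R) ℝ),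
      k ≤ R ^ 2 - 2 * R + 1 ∧
      (∀ i, 0 ≤ lam i) ∧ (∀ i, IsPermutationMatrix (P i)) ∧
      H = ∑ i, lam i • ((1 : Matrix (Fin R) (Fin R) ℝ) - P i) := by
  obtain ⟨⟨hoff, -, -⟩, hrow, hcol⟩ := hH
  obtain ⟨w, hw, hHw⟩ := exists_eq_sum_smul_one_sub_permMatrix hoff hrow hcol
  obtain ⟨t, -, hli, m, hm, hmw⟩ := exists_linearIndepOn_nonneg_sum_eq
    (v := fun σ : Equiv.Perm (Fin R) => 1 - σ.permMatrix ℝ) (s := Finset.univ)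
    fun σ _ => hw σ
  have hdim : (R - 1) ^ 2 ≤ R ^ 2 - 2 * R + 1 := by
    cases R <;> simp [sq, Nat.succ_mul, Nat.mul_succ]
    omega
  have hcard : t.card ≤ R ^ 2 - 2 * R + 1 :=
    ((Submodule.card_le_finrank_of_linearIndepOn hli fun σ _ =>
      one_sub_permMatrix_mem_zeroLineSums σ).trans (finrank_zeroLineSums_le ℝ R)).trans hdim
  let σ : Fin t.card → Equiv.Perm (Fin R) := fun i => t.equivFin.symm i
  refine ⟨t.card, fun i => m (σ i), fun i => (σ i).permMatrix ℝ, hcard,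
    fun i => hm _ (t.equivFin.symm i).2, fun i => isPermutationMatrix_permMatrix _, ?_⟩
  rw [hHw, ← hmw, ← Finset.sum_coe_sort t, ← t.equivFin.symm.sum_comp]
end

section
/- (Lyapunov form of the asymptotic bound.) Let q, p, d ≥ 1, let Â ∈ ℝ^{q×q}, B̂ ∈ ℝ^{q×1}, Ĉ ∈ ℝ^{p×q}, D̂ ∈ ℝ^{p×1}, let P be a real symmetric positive definite q×q matrix, let ρ ≥ 0, and let K be a real symmetric p×p matrix. Suppose the matrix [ρ²P, 0; 0, 0] − [Â, B̂]ᵀ P [Â, B̂] − [Ĉ, D̂]ᵀ K [Ĉ, D̂] (a symmetric (q+1)×(q+1) matrix) is positive semidefinite. Let η_k ∈ ℝ^{qd} and u_k ∈ ℝ^d be sequences satisfying η_{k+1} = (Â ⊗ I_d) η_k + (B̂ ⊗ I_d) u_k and, for every k, (η_kᵀ, u_kᵀ) ([Ĉ, D̂]ᵀ K [Ĉ, D̂] ⊗ I_d) (η_kᵀ, u_kᵀ)ᵀ ≥ 0. Then η_kᵀ (P ⊗ I_d) η_k ≤ ρ^{2k} η_0ᵀ (P ⊗ I_d) η_0 for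 every k ≥ 0, and consequently ‖η_k‖ ≤ √(λ_max(P)/λ_min(P)) · ρ^k · ‖η_0‖ for every k ≥ 0, where λ_max(P) and λ_min(P) denote the largest and smallest eigenvalues of P. -/
/-!
With `V η = ηᵀ (P ⊗ I) η`, Kronecker products with the identity split every quadratic form into a
sum over the `d` coordinate columns. On each column the LMI, tested on the stacked vector
`(η_k, u_k)`, says `V η_{k+1} + (S-procedure term) ≤ ρ² V η_k`; summing over the columns and
discarding the nonnegative S-procedure term gives `V η_{k+1} ≤ ρ² V η_k`, hence
`V η_k ≤ ρ^{2k} V η_0`. The norm bound then follows from `λ_min ‖η‖² ≤ V η ≤ λ_max ‖η‖²`.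
-/

open Matrix Kronecker

theorem dotProduct_transpose_mul_mul_mulVec {R : Type*} [CommSemiring R] {m n : Type*}
    [Fintype m] [Fintype n] (F : Matrix m n R) (M : Matrix m m R) (w : n → R) :
    w ⬝ᵥ ((Fᵀ * M * F) *ᵥ w) = (F *ᵥ w) ⬝ᵥ (M *ᵥ (F *ᵥ w)) := by
  rw [← mulVec_mulVec, ← mulVec_mulVec, dotProduct_mulVec, vecMul_transpose]

theorem sumElim_dotProduct_fromBlocks_zero_mulVec {R : Type*} [CommSemiring R] {n o : Type*}
    [Fintype n] [Fintype o] (M : Matrix n n R) (y : n → R) (v : o → R) :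
    Sum.elim y v ⬝ᵥ (fromBlocks M 0 0 0 *ᵥ Sum.elim y v) = y ⬝ᵥ (M *ᵥ y) := by
  simp [fromBlocks_mulVec, sumElim_dotProduct_sumElim]

section KroneckerOne

variable {R : Type*} [CommSemiring R] {m n ι : Type*} [Fintype n] [Fintype ι] [DecidableEq ι]

theorem kronecker_one_mulVec_apply (M : Matrix m n R) (x : n × ι → R) (i : m) (j : ι) :
    ((M ⊗ₖ (1 : Matrix ι ι R)) *ᵥ x) (i, j) = (M *ᵥ fun i' => x (i', j)) i := by
  simp [mulVec, dotProduct, Fintype.sum_prod_type, kroneckerMap_apply, one_apply]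

theorem dotProduct_kronecker_one_mulVec (M : Matrix n n R) (x : n × ι → R) :
    x ⬝ᵥ ((M ⊗ₖ (1 : Matrix ι ι R)) *ᵥ x)
      = ∑ j, (fun i => x (i, j)) ⬝ᵥ (M *ᵥ fun i => x (i, j)) := by
  simp only [dotProduct, Fintype.sum_prod_type, kronecker_one_mulVec_apply]
  exact Finset.sum_comm

end KroneckerOne

theorem dotProduct_kronecker_one_mulVec_mono {n ι : Type*} [Fintype n] [Fintype ι] [DecidableEq ι]
    {M N : Matrix n n ℝ} (h : (N - M).PosSemidef) (x : n × ι → ℝ) :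
    x ⬝ᵥ ((M ⊗ₖ (1 : Matrix ι ι ℝ)) *ᵥ x) ≤ x ⬝ᵥ ((N ⊗ₖ (1 : Matrix ι ι ℝ)) *ᵥ x) := by
  rw [dotProduct_kronecker_one_mulVec, dotProduct_kronecker_one_mulVec]
  refine Finset.sum_le_sum fun j _ => ?_
  have hj := h.dotProduct_mulVec_nonneg (fun i => x (i, j))
  rwa [star_trivial, sub_mulVec, dotProduct_sub, sub_nonneg] at hj

theorem dotProduct_smul_one_kronecker_one_mulVec {n ι : Type*} [Fintype n] [DecidableEq n]
    [Fintype ι] [DecidableEq ι] (c : ℝ) (x : n × ι → ℝ) :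
    x ⬝ᵥ (((c • 1 : Matrix n n ℝ) ⊗ₖ (1 : Matrix ι ι ℝ)) *ᵥ x) = c * (x ⬝ᵥ x) := by
  simp [smul_kronecker, smul_mulVec]

section Eigenvalues

open scoped MatrixOrder ComplexOrder

variable {𝕜 n : Type*} [RCLike 𝕜] [Fintype n] [DecidableEq n] {A : Matrix n n 𝕜}

theorem Matrix.IsHermitian.posSemidef_sub_smul_one (hA : A.IsHermitian) {c : ℝ}
    (h : ∀ i, c ≤ hA.eigenvalues i) : (A - c • 1).PosSemidef := by
  have : algebraMap ℝ _ c ≤ A := algebraMap_le_of_le_spectrum (fun x hx => by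
    obtain ⟨i, rfl⟩ := hA.spectrum_real_eq_range_eigenvalues ▸ hx
    exact h i) hA
  rwa [le_iff, Algebra.algebraMap_eq_smul_one] at this

theorem Matrix.IsHermitian.posSemidef_smul_one_sub (hA : A.IsHermitian) {c : ℝ}
    (h : ∀ i, hA.eigenvalues i ≤ c) : (c • 1 - A).PosSemidef := by
  have : A ≤ algebraMap ℝ _ c := le_algebraMap_of_spectrum_le (fun x hx => by
    obtain ⟨i, rfl⟩ := hA.spectrum_real_eq_range_eigenvalues ▸ hx
    exact h i) hA
  rwa [le_iff, Algebra.algebraMap_eq_smul_one] at this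

end Eigenvalues

section Lyapunov

variable {n o m ι : Type*} [Fintype n] [Fintype o] [Fintype m] [Fintype ι] [DecidableEq ι]

theorem dotProduct_mulVec_add_le_of_posSemidef {F : Matrix m (n ⊕ o) ℝ}
    {P : Matrix m m ℝ} {Q : Matrix n n ℝ} {N : Matrix (n ⊕ o) (n ⊕ o) ℝ}
    (hLMI : (fromBlocks Q 0 0 0 - Fᵀ * P * F - N).PosSemidef) (y : n → ℝ) (v : o → ℝ) :
    (F *ᵥ Sum.elim y v) ⬝ᵥ (P *ᵥ (F *ᵥ Sum.elim y v)) + Sum.elim y v ⬝ᵥ (N *ᵥ Sum.elim y v)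
      ≤ y ⬝ᵥ (Q *ᵥ y) := by
  have h := hLMI.dotProduct_mulVec_nonneg (Sum.elim y v)
  rw [star_trivial, sub_mulVec, sub_mulVec, dotProduct_sub, dotProduct_sub,
    sumElim_dotProduct_fromBlocks_zero_mulVec, dotProduct_transpose_mul_mul_mulVec] at h
  linarith

theorem lyapunov_decrease {A : Matrix n n ℝ} {B : Matrix n o ℝ}
    {P Q : Matrix n n ℝ} {N : Matrix (n ⊕ o) (n ⊕ o) ℝ}
    (hLMI : (fromBlocks Q 0 0 0 - (fromCols A B)ᵀ * P * fromCols A B - N).PosSemidef)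
    {x x' : n × ι → ℝ} {v : o × ι → ℝ} {ζ : (n ⊕ o) × ι → ℝ}
    (hx' : ∀ z, x' z = ((A ⊗ₖ (1 : Matrix ι ι ℝ)) *ᵥ x) z + ((B ⊗ₖ (1 : Matrix ι ι ℝ)) *ᵥ v) z)
    (hζ : ∀ z, ζ z = Sum.elim (fun i => x (i, z.2)) (fun i => v (i, z.2)) z.1)
    (hN : 0 ≤ ζ ⬝ᵥ ((N ⊗ₖ (1 : Matrix ι ι ℝ)) *ᵥ ζ)) :
    x' ⬝ᵥ ((P ⊗ₖ (1 : Matrix ι ι ℝ)) *ᵥ x') ≤ x ⬝ᵥ ((Q ⊗ₖ (1 : Matrix ι ι ℝ)) *ᵥ x) := by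
  set w : ι → n ⊕ o → ℝ := fun j => Sum.elim (fun i => x (i, j)) (fun i => v (i, j))
  have hζcol : ∀ j, (fun c => ζ (c, j)) = w j := fun j => funext fun c => hζ (c, j)
  have hx'col : ∀ j, (fun i => x' (i, j)) = fromCols A B *ᵥ w j := fun j => funext fun i => by
    rw [hx', kronecker_one_mulVec_apply, kronecker_one_mulVec_apply, fromCols_mulVec_sumElim]
    rfl
  rw [dotProduct_kronecker_one_mulVec] at hN
  rw [dotProduct_kronecker_one_mulVec, dotProduct_kronecker_one_mulVec]
  simp only [hζcol, hx'col] at hN ⊢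
  have hsum := Finset.sum_le_sum fun j (_ : j ∈ Finset.univ) =>
    dotProduct_mulVec_add_le_of_posSemidef hLMI (fun i => x (i, j)) (fun i => v (i, j))
  rw [Finset.sum_add_distrib] at hsum
  linarith

end Lyapunov

theorem le_sqrt_div_mul_of_mul_sq_le {a b s t : ℝ} (ha : 0 < a) (ht : 0 ≤ t)
    (h : a * s ^ 2 ≤ b * t ^ 2) : s ≤ √(b / a) * t := by
  have hs : s ^ 2 ≤ b / a * t ^ 2 := by
    rw [div_mul_eq_mul_div, le_div_iff₀ ha]
    linarith
  calc s ≤ |s| := le_abs_self s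
    _ ≤ √(b / a * t ^ 2) := Real.abs_le_sqrt hs
    _ = √(b / a) * t := by rw [Real.sqrt_mul' _ (sq_nonneg t), Real.sqrt_sq ht]

theorem EuclideanSpace.real_norm_sq_eq_dotProduct {n : Type*} [Fintype n]
    (x : EuclideanSpace ℝ n) : ‖x‖ ^ 2 = x.ofLp ⬝ᵥ x.ofLp := by
  rw [EuclideanSpace.real_norm_sq_eq, dotProduct]
  simp only [sq]

theorem lyapunov_asymptotic_bound_general
    {q p d : ℕ} (hq : 1 ≤ q)
    (Ahat : Matrix (Fin q) (Fin q) ℝ) (Bhat : Matrix (Fin q) (Fin 1) ℝ)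
    (Chat : Matrix (Fin p) (Fin q) ℝ) (Dhat : Matrix (Fin p) (Fin 1) ℝ)
    (P : Matrix (Fin q) (Fin q) ℝ) (hP : P.PosDef)
    (ρ : ℝ) (hρ : 0 ≤ ρ)
    (K : Matrix (Fin p) (Fin p) ℝ)
    (hLMI : (fromBlocks (ρ ^ 2 • P) 0 0 0
        - (fromCols Ahat Bhat)ᵀ * P * fromCols Ahat Bhat
        - (fromCols Chat Dhat)ᵀ * K * fromCols Chat Dhat).PosSemidef)
    (η : ℕ → EuclideanSpace ℝ (Fin q × Fin d))
    (u : ℕ → EuclideanSpace ℝ (Fin d))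
    (hdyn : ∀ (k : ℕ) (pp : Fin q × Fin d),
      η (k + 1) pp = ((Ahat ⊗ₖ (1 : Matrix (Fin d) (Fin d) ℝ)).mulVec
          (fun z => η k z)) pp
        + ((Bhat ⊗ₖ (1 : Matrix (Fin d) (Fin d) ℝ)).mulVec
          (fun z : Fin 1 × Fin d => u k z.2)) pp)
    (ζ : ℕ → (Fin q ⊕ Fin 1) × Fin d → ℝ)
    (hζ : ∀ (k : ℕ) (z : (Fin q ⊕ Fin 1) × Fin d),
      ζ k z = Sum.elim (fun i => η k (i, z.2)) (fun _ => u k z.2) z.1)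
    (hineq : ∀ k : ℕ,
      0 ≤ ζ k ⬝ᵥ ((((fromCols Chat Dhat)ᵀ * K * fromCols Chat Dhat) ⊗ₖ
          (1 : Matrix (Fin d) (Fin d) ℝ)).mulVec (ζ k))) :
    (∀ k : ℕ,
      (fun z => η k z) ⬝ᵥ ((P ⊗ₖ (1 : Matrix (Fin d) (Fin d) ℝ)).mulVec (fun z => η k z))
        ≤ ρ ^ (2 * k) *
          ((fun z => η 0 z) ⬝ᵥ ((P ⊗ₖ (1 : Matrix (Fin d) (Fin d) ℝ)).mulVec
            (fun z => η 0 z)))) ∧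
    ∀ k : ℕ, ‖η k‖ ≤
      Real.sqrt ((⨆ i, hP.1.eigenvalues i) / (⨅ i, hP.1.eigenvalues i)) * ρ ^ k * ‖η 0‖ := by
  set V : ℕ → ℝ := fun k =>
    (fun z => η k z) ⬝ᵥ ((P ⊗ₖ (1 : Matrix (Fin d) (Fin d) ℝ)) *ᵥ fun z => η k z)
  have hstep : ∀ k, V (k + 1) ≤ ρ ^ 2 * V k := fun k => by
    simpa [V, smul_kronecker, smul_mulVec] using
      lyapunov_decrease hLMI (hdyn k) (hζ k) (hineq k)
  have hdecay : ∀ k, V k ≤ ρ ^ (2 * k) * V 0 := fun k => by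
    simpa only [pow_mul] using le_geom (sq_nonneg ρ) k fun i _ => hstep i
  refine ⟨hdecay, fun k => ?_⟩
  have : Nonempty (Fin q) := ⟨⟨0, hq⟩⟩
  set eig := hP.1.eigenvalues
  have hmin_pos : 0 < ⨅ i, eig i := by
    obtain ⟨i, hi⟩ := exists_eq_ciInf_of_finite (f := eig)
    exact hi ▸ hP.eigenvalues_pos i
  have hlower : (⨅ i, eig i) * ‖η k‖ ^ 2 ≤ V k := by
    rw [EuclideanSpace.real_norm_sq_eq_dotProduct, ← dotProduct_smul_one_kronecker_one_mulVec]
    exact dotProduct_kronecker_one_mulVec_mono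
      (hP.1.posSemidef_sub_smul_one fun i => ciInf_le (Set.finite_range eig).bddBelow i) _
  have hupper : V 0 ≤ (⨆ i, eig i) * ‖η 0‖ ^ 2 := by
    rw [EuclideanSpace.real_norm_sq_eq_dotProduct, ← dotProduct_smul_one_kronecker_one_mulVec]
    exact dotProduct_kronecker_one_mulVec_mono
      (hP.1.posSemidef_smul_one_sub fun i => le_ciSup (Set.finite_range eig).bddAbove i) _
  rw [mul_assoc]
  refine le_sqrt_div_mul_of_mul_sq_le hmin_pos (by positivity) ?_
  calc (⨅ i, eig i) * ‖η k‖ ^ 2 ≤ V k := hlower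
    _ ≤ ρ ^ (2 * k) * V 0 := hdecay k
    _ ≤ ρ ^ (2 * k) * ((⨆ i, eig i) * ‖η 0‖ ^ 2) := by gcongr
    _ = (⨆ i, eig i) * (ρ ^ k * ‖η 0‖) ^ 2 := by ring

/-- Lyapunov form of the asymptotic performance bound. -/
theorem lyapunov_asymptotic_bound
    {q p d : ℕ} (hq : 1 ≤ q) (hp : 1 ≤ p) (hd : 1 ≤ d)
    (Ahat : Matrix (Fin q) (Fin q) ℝ) (Bhat : Matrix (Fin q) (Fin 1) ℝ)
    (Chat : Matrix (Fin p) (Fin q) ℝ) (Dhat : Matrix (Fin p) (Fin 1) ℝ)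
    (P : Matrix (Fin q) (Fin q) ℝ) (hP : P.PosDef)
    (ρ : ℝ) (hρ : 0 ≤ ρ)
    (K : Matrix (Fin p) (Fin p) ℝ) (hK : K.IsSymm)
    (hLMI : (fromBlocks (ρ ^ 2 • P) 0 0 0
        - (fromCols Ahat Bhat)ᵀ * P * fromCols Ahat Bhat
        - (fromCols Chat Dhat)ᵀ * K * fromCols Chat Dhat).PosSemidef)
    (η : ℕ → EuclideanSpace ℝ (Fin q × Fin d))
    (u : ℕ → EuclideanSpace ℝ (Fin d))
    (hdyn : ∀ (k : ℕ) (pp : Fin q × Fin d),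
      η (k + 1) pp = ((Ahat ⊗ₖ (1 : Matrix (Fin d) (Fin d) ℝ)).mulVec
          (fun z => η k z)) pp
        + ((Bhat ⊗ₖ (1 : Matrix (Fin d) (Fin d) ℝ)).mulVec
          (fun z : Fin 1 × Fin d => u k z.2)) pp)
    (ζ : ℕ → (Fin q ⊕ Fin 1) × Fin d → ℝ)
    (hζ : ∀ (k : ℕ) (z : (Fin q ⊕ Fin 1) × Fin d),
      ζ k z = Sum.elim (fun i => η k (i, z.2)) (fun _ => u k z.2) z.1)
    (hineq : ∀ k : ℕ,
      0 ≤ ζ k ⬝ᵥ ((((fromCols Chat Dhat)ᵀ * K * fromCols Chat Dhat) ⊗ₖ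
          (1 : Matrix (Fin d) (Fin d) ℝ)).mulVec (ζ k))) :
    (∀ k : ℕ,
      (fun z => η k z) ⬝ᵥ ((P ⊗ₖ (1 : Matrix (Fin d) (Fin d) ℝ)).mulVec (fun z => η k z))
        ≤ ρ ^ (2 * k) *
          ((fun z => η 0 z) ⬝ᵥ ((P ⊗ₖ (1 : Matrix (Fin d) (Fin d) ℝ)).mulVec
            (fun z => η 0 z)))) ∧
    ∀ k : ℕ, ‖η k‖ ≤
      Real.sqrt ((⨆ i, hP.1.eigenvalues i) / (⨅ i, hP.1.eigenvalues i)) * ρ ^ k * ‖η 0‖ :=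
  lyapunov_asymptotic_bound_general hq Ahat Bhat Chat Dhat P hP ρ hρ K hLMI η u hdyn ζ hζ hineq
end
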